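/- Let M be the circle of circumference 2πr with its intrinsic metric, let N ⊆ M be a subset with the restricted metric, and let g : N → N be a surjective distance-preserving map. Then g extends to a distance-preserving bijection ḡ : M → M with ḡ|_N = g. -/

import Mathlib

/-!
On the circle `ℝ ⧸ pℤ` the norm determines an element up to sign. Hence a distance-preserving
map `f` on a subset satisfies `f x - f y = ±(x - y)` for a fixed base point `y`. If the sign is
`-` for some `x₀`, it is `-` for every `x`: otherwise comparing `dist (f x₀) (f x)` with
`dist x₀ x` forces `x₀ - y = -(x₀ - y)`. So `f` is the restriction of a translation `z ↦ c + z`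
or of a reflection `z ↦ c - z`, both isometries of the whole circle.
-/

def NormDeterminesUpToSign (E : Type*) [SeminormedAddCommGroup E] : Prop :=
  ∀ u v : E, ‖u‖ = ‖v‖ → u = v ∨ u = -v

namespace AddCircle

theorem coe_sub_round_mul_period (p x : ℝ) :
    ((x - round (p⁻¹ * x) * p : ℝ) : AddCircle p) = x := by
  rw [coe_sub, ← zsmul_eq_mul, coe_zsmul, coe_period, smul_zero, sub_zero]

theorem normDeterminesUpToSign (p : ℝ) : NormDeterminesUpToSign (AddCircle p) := by
  intro u v h
  induction u using QuotientAddGroup.induction_on with | H a => ?_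
  induction v using QuotientAddGroup.induction_on with | H b => ?_
  rw [norm_eq, norm_eq] at h
  rw [← coe_sub_round_mul_period p a, ← coe_sub_round_mul_period p b, ← coe_neg]
  rcases abs_eq_abs.mp h with h | h <;> rw [h] <;> simp

end AddCircle

namespace NormDeterminesUpToSign

variable {E : Type*} [SeminormedAddCommGroup E] {S : Set E} {f : S → E}

theorem eq_neg_of_norm_neg_sub_eq (hE : NormDeterminesUpToSign E) {a b : E}
    (ha : a ≠ -a) (h : ‖-a - b‖ = ‖a - b‖) : b = -b := by
  rcases hE _ _ h with h | h
  · exact absurd (sub_left_inj.mp h).symm ha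
  · rw [neg_sub, sub_eq_sub_iff_add_eq_add, neg_add_cancel] at h
    exact eq_neg_of_add_eq_zero_left h.symm

theorem sub_eq_or_eq_neg_of_dist_eq (hE : NormDeterminesUpToSign E)
    (hf : ∀ a b : S, dist (f a) (f b) = dist (a : E) b) (x y : S) :
    f x - f y = x - y ∨ f x - f y = -(x - y) :=
  hE _ _ (by rw [← dist_eq_norm, ← dist_eq_norm, hf])

theorem sub_eq_neg_of_sub_ne (hE : NormDeterminesUpToSign E)
    (hf : ∀ a b : S, dist (f a) (f b) = dist (a : E) b) {x₀ y : S}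
    (hx₀ : f x₀ - f y ≠ x₀ - y) (x : S) :
    f x - f y = -(x - y) := by
  have ha := (sub_eq_or_eq_neg_of_dist_eq hE hf x₀ y).resolve_left hx₀
  refine (sub_eq_or_eq_neg_of_dist_eq hE hf x y).elim (fun hb => ?_) id
  refine hb.trans (hE.eq_neg_of_norm_neg_sub_eq (fun h => hx₀ (ha.trans h.symm)) ?_)
  calc ‖-((x₀ : E) - y) - (x - y)‖ = ‖f x₀ - f x‖ := by
        rw [← ha, ← hb, sub_sub_sub_cancel_right]
    _ = ‖((x₀ : E) - y) - (x - y)‖ := by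
      rw [← dist_eq_norm, hf, dist_eq_norm, sub_sub_sub_cancel_right]

theorem exists_isometryEquiv_extension (hE : NormDeterminesUpToSign E)
    (hf : ∀ a b : S, dist (f a) (f b) = dist (a : E) b) :
    ∃ e : E ≃ᵢ E, ∀ x : S, e x = f x := by
  rcases isEmpty_or_nonempty S with hS | ⟨⟨y⟩⟩
  · exact ⟨IsometryEquiv.refl E, isEmptyElim⟩
  by_cases htr : ∀ x : S, f x - f y = x - y
  · exact ⟨IsometryEquiv.addLeft (f y - y), fun x => by grind [IsometryEquiv.addLeft_apply]⟩
  · push Not at htr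
    obtain ⟨x₀, hx₀⟩ := htr
    refine ⟨IsometryEquiv.subLeft (f y + y), fun x => ?_⟩
    grind [IsometryEquiv.subLeft_apply, hE.sub_eq_neg_of_sub_ne hf hx₀ x]

end NormDeterminesUpToSign

theorem circle_subset_isometry_extends_general
    (r : ℝ)
    (N : Set (AddCircle (2 * Real.pi * r)))
    (g : N → N)
    (hgi : ∀ a b : N, dist (g a : AddCircle (2 * Real.pi * r)) (g b)
      = dist (a : AddCircle (2 * Real.pi * r)) b) :
    ∃ gbar : AddCircle (2 * Real.pi * r) → AddCircle (2 * Real.pi * r),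
      Isometry gbar ∧ Function.Bijective gbar ∧ ∀ x : N, gbar x = g x := by
  obtain ⟨e, he⟩ :=
    (AddCircle.normDeterminesUpToSign (2 * Real.pi * r)).exists_isometryEquiv_extension
      (S := N) (f := fun x => g x) hgi
  exact ⟨e, e.isometry, e.bijective, he⟩

theorem circle_subset_isometry_extends
    (r : ℝ) (hr : 0 < r)
    (N : Set (AddCircle (2 * Real.pi * r)))
    (g : N → N)
    (hgs : Function.Surjective g)
    (hgi : ∀ a b : N, dist (g a : AddCircle (2 * Real.pi * r)) (g b)
      = dist (a : AddCircle (2 * Real.pi * r)) b) :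
    ∃ gbar : AddCircle (2 * Real.pi * r) → AddCircle (2 * Real.pi * r),
      Isometry gbar ∧ Function.Bijective gbar ∧ ∀ x : N, gbar x = g x :=
  circle_subset_isometry_extends_general r N g hgi
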